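/- arXiv:2503.16102 — 2 statements merged into one kernel-verified Lean document; each statement's English description precedes it below -/
import Mathlib

section
/- Let L be a level datum such that L is empty, or the largest level of L is < 1, or the largest level of L is > 2 (i.e. L is a locally minimal level datum at infinity). Then B_L = 2 if and only if L = {5/2}. -/
open Finset

/-- The ramification order of a level datum: the least common denominator of its
elements, i.e. the lcm of the denominators (`ram ∅ = 1`). -/
def ram (L : Finset ℚ) : ℕ := L.lcm Rat.den

/-- The least common denominator `d` of the "initial segment" of `L` consisting of the
elements `≥ k` (the elements come in decreasing order `k₀ > k₁ > ⋯`). -/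
def segLcm (L : Finset ℚ) (k : ℚ) : ℕ := (L.filter (fun x => k ≤ x)).lcm Rat.den

/-- A level datum: a finite set of positive rationals such that the least common
denominators `d₀, d₁, …` of the initial segments (for the decreasing order) are all `≥ 2`
and form a strictly increasing sequence.  (Since the `d_j` are increasing, requiring
`d_j ≥ 2` for all `j` is equivalent to `d₀ ≥ 2`, i.e. to the largest element not being
an integer.) -/
def IsLevelDatum (L : Finset ℚ) : Prop :=
  (∀ k ∈ L, 0 < k) ∧
  (∀ k ∈ L, 2 ≤ segLcm L k) ∧
  (∀ k ∈ L, ∀ k' ∈ L, k' < k → segLcm L k < segLcm L k')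

/-- The largest level of `L` (junk value `0` for `L = ∅`). -/
def maxLevel (L : Finset ℚ) : ℚ := WithBot.unbotD 0 L.max

/-- The numerator `s(k) := k · Ram(L) ∈ ℤ` of a level `k` of `L`. -/
def numer (L : Finset ℚ) (k : ℚ) : ℤ := (k * (ram L : ℚ)).num

/-- `σ := k₀ · Ram(L) ∈ ℤ`, the numerator of the largest level. -/
def sigma0 (L : Finset ℚ) : ℤ := numer L (maxLevel L)

/-- `gcd(s(x) for x ∈ s, Ram L)` : the gcd of `Ram L` together with the numerators of the
elements of a subset `s ⊆ L`. -/
def gSeg (L : Finset ℚ) (s : Finset ℚ) : ℕ :=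
  Nat.gcd (ram L) (s.gcd (fun x => (numer L x).natAbs))

/-- The quantity
`B_L = (r − (s₀,r))·s₀ + Σᵢ ((s₀,…,s_{i−1},r) − (s₀,…,s_i,r))·s_i − r² + 1`
(`B_∅ = 0`), equal to the dimension of the elementary wild character variety. -/
def B (L : Finset ℚ) : ℤ :=
  (∑ k ∈ L, ((gSeg L (L.filter (fun x => k < x)) : ℤ)
      - (gSeg L (L.filter (fun x => k ≤ x)) : ℤ)) * numer L k)
    - (ram L : ℤ) ^ 2 + 1

/-- A level datum is locally minimal at infinity if it is empty, or its largest level is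
`< 1` or `> 2`. -/
def LocallyMinimal (L : Finset ℚ) : Prop :=
  L = ∅ ∨ maxLevel L < 1 ∨ 2 < maxLevel L

/-- Rescaling of a level datum by a factor `c`, removing the integer elements. -/
def rescale (L : Finset ℚ) (c : ℚ) : Finset ℚ :=
  (L.image (fun k => c * k)).filter (fun x => x.den ≠ 1)

/-- The local simplification map `S_∞` on level data: if the largest level `k₀` satisfies
`1 < k₀ < 2`, rescale all the levels by `ρ/(σ−ρ)` (where `ρ = Ram L`, `σ = k₀·ρ`) and
remove the integer levels; otherwise do nothing. -/
def Sinf (L : Finset ℚ) : Finset ℚ :=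
  if 1 < maxLevel L ∧ maxLevel L < 2 then
    rescale L ((ram L : ℚ) / ((sigma0 L : ℚ) - (ram L : ℚ)))
  else L

/-!
Write `r = Ram L` and `s_k = k·r`. The coefficients `gcd(s_x : x > k, r) − gcd(s_x : x ≥ k, r)`
in `B_L` are nonnegative and telescope to `r − gcd(s_x : x ∈ L, r) ≤ r − 1`. If all levels are
`< 1`, then `s_k ≤ r − 1` and `B_L ≤ (r − 1)² − r² + 1 < 2`. If the top level `k₀ = n/d` is `> 2`,
keep only its term: with `g = gcd(s₀, r) = r/d` it gives `B_L − 1 ≥ g²((d − 1)n − d²)`, and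
`(d − 1)n − d² ≥ d² − d − 1 ≥ 1` since `n > 2d ≥ 4`. So `B_L = 2` forces `g = 1`, i.e. `d = r`,
which for a level datum leaves no room for a second level, and then `d = 2`, `n = 5`.
-/

theorem Finset.sum_sub_filter_lt_filter_le {α M : Type*} [LinearOrder α] [AddCommGroup M]
    (f : Finset α → M) (S : Finset α) :
    ∑ k ∈ S, (f (S.filter (k < ·)) - f (S.filter (k ≤ ·))) = f ∅ - f S := by
  induction S using Finset.induction_on_min with
  | empty => simp
  | insert a s ha ih =>
    have has : a ∉ s := fun h => lt_irrefl a (ha a h)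
    have hlt : (insert a s).filter (a < ·) = s := by
      rw [filter_insert, if_neg (lt_irrefl a)]
      exact filter_true_of_mem ha
    have hle : (insert a s).filter (a ≤ ·) = insert a s :=
      filter_true_of_mem fun b hb => (mem_insert.mp hb).elim (fun h => h.ge) fun h => (ha b h).le
    have hrest : ∀ k ∈ s, f ((insert a s).filter (k < ·)) - f ((insert a s).filter (k ≤ ·))
        = f (s.filter (k < ·)) - f (s.filter (k ≤ ·)) := fun k hk => by
      rw [filter_insert, filter_insert, if_neg (ha k hk).not_gt, if_neg (ha k hk).not_ge]
    rw [sum_insert has, hlt, hle, sum_congr rfl hrest, ih]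
    abel

theorem Rat.mul_natCast_eq_intCast {q : ℚ} {n : ℕ} (h : q.den ∣ n) :
    q * n = ((q.num * (n / q.den : ℕ) : ℤ) : ℚ) := by
  obtain ⟨m, rfl⟩ := h
  rw [Nat.mul_div_cancel_left _ q.pos]
  push_cast
  rw [← Rat.mul_den_eq_num]
  ring

theorem Rat.two_mul_den_lt_num {q : ℚ} (h : 2 < q) : 2 * (q.den : ℤ) < q.num := by
  rw [← Rat.num_div_den q, lt_div_iff₀ (by exact_mod_cast q.pos)] at h
  exact_mod_cast h

theorem ram_pos (L : Finset ℚ) : 0 < ram L :=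
  Nat.pos_of_ne_zero fun h => by
    obtain ⟨x, -, hx⟩ := lcm_eq_zero_iff.mp h
    exact x.den_nz hx

theorem den_dvd_ram {L : Finset ℚ} {x : ℚ} (hx : x ∈ L) : x.den ∣ ram L :=
  dvd_lcm hx

theorem segLcm_dvd_ram (L : Finset ℚ) (k : ℚ) : segLcm L k ∣ ram L :=
  lcm_mono (filter_subset _ _)

theorem numer_eq {L : Finset ℚ} {x : ℚ} (hx : x ∈ L) :
    numer L x = x.num * (ram L / x.den : ℕ) := by
  rw [numer, Rat.mul_natCast_eq_intCast (den_dvd_ram hx), Rat.num_intCast]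

theorem numer_cast {L : Finset ℚ} {x : ℚ} (hx : x ∈ L) : (numer L x : ℚ) = x * ram L := by
  rw [numer_eq hx, Rat.mul_natCast_eq_intCast (den_dvd_ram hx)]

theorem gcd_ram_numer {L : Finset ℚ} {x : ℚ} (hx : x ∈ L) :
    Nat.gcd (ram L) (numer L x).natAbs = ram L / x.den := by
  obtain ⟨m, hm⟩ := den_dvd_ram hx
  rw [numer_eq hx, Int.natAbs_mul, Int.natAbs_natCast, hm, Nat.mul_div_cancel_left _ x.pos,
    Nat.gcd_mul_right, Nat.Coprime.gcd_eq_one x.reduced.symm, one_mul]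

theorem gSeg_pos (L s : Finset ℚ) : 0 < gSeg L s :=
  Nat.gcd_pos_of_pos_left _ (ram_pos L)

theorem gSeg_le_of_subset (L : Finset ℚ) {s t : Finset ℚ} (h : s ⊆ t) : gSeg L t ≤ gSeg L s :=
  Nat.le_of_dvd (gSeg_pos L s) (Nat.gcd_dvd_gcd_of_dvd_right _ (gcd_mono h))

theorem gSeg_empty (L : Finset ℚ) : gSeg L ∅ = ram L := by
  simp [gSeg]

theorem gSeg_singleton {L : Finset ℚ} {x : ℚ} (hx : x ∈ L) : gSeg L {x} = ram L / x.den := by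
  rw [gSeg, gcd_singleton, normalize_eq, gcd_ram_numer hx]

/-- The coefficient `gcd(s₀, …, s_{i−1}, r) − gcd(s₀, …, s_i, r)` of `s_i = numer L k` in `B L`,
for `k = k_i`. -/
def gcdDrop (L : Finset ℚ) (k : ℚ) : ℤ :=
  (gSeg L (L.filter (k < ·)) : ℤ) - (gSeg L (L.filter (k ≤ ·)) : ℤ)

theorem B_eq (L : Finset ℚ) : B L = ∑ k ∈ L, gcdDrop L k * numer L k - (ram L : ℤ) ^ 2 + 1 :=
  rfl

theorem gcdDrop_nonneg (L : Finset ℚ) (k : ℚ) : 0 ≤ gcdDrop L k := by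
  have := gSeg_le_of_subset L (monotone_filter_right L fun (x : ℚ) _ (h : k < x) => h.le)
  rw [gcdDrop, sub_nonneg]
  exact_mod_cast this

theorem sum_gcdDrop (L : Finset ℚ) : ∑ k ∈ L, gcdDrop L k = ram L - gSeg L L := by
  rw [← gSeg_empty L]
  exact sum_sub_filter_lt_filter_le (fun s => (gSeg L s : ℤ)) L

theorem B_lt_two_of_forall_lt_one {L : Finset ℚ} (h : ∀ k ∈ L, k < 1) : B L < 2 := by
  have hr : (1 : ℤ) ≤ ram L := by exact_mod_cast ram_pos L
  have hg : (1 : ℤ) ≤ gSeg L L := by exact_mod_cast gSeg_pos L L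
  have hnumer : ∀ k ∈ L, numer L k ≤ ram L - 1 := fun k hk => by
    have : (numer L k : ℚ) < ram L := by
      rw [numer_cast hk]
      exact mul_lt_of_lt_one_left (by exact_mod_cast ram_pos L) (h k hk)
    have : numer L k < ram L := by exact_mod_cast this
    omega
  have hsum : ∑ k ∈ L, gcdDrop L k * numer L k ≤ (ram L - gSeg L L) * (ram L - 1) := by
    rw [← sum_gcdDrop, sum_mul]
    exact sum_le_sum fun k hk => mul_le_mul_of_nonneg_left (hnumer k hk) (gcdDrop_nonneg L k)
  rw [B_eq]
  nlinarith

theorem gcdDrop_mul_numer_le_B {L : Finset ℚ} (hpos : ∀ k ∈ L, 0 < k) {k : ℚ} (hk : k ∈ L) :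
    gcdDrop L k * numer L k - (ram L : ℤ) ^ 2 + 1 ≤ B L := by
  have hnonneg : ∀ x ∈ L, 0 ≤ gcdDrop L x * numer L x := fun x hx =>
    mul_nonneg (gcdDrop_nonneg L x)
      (Rat.num_nonneg.mpr (mul_nonneg (hpos x hx).le (Nat.cast_nonneg _)))
  rw [B_eq]
  linarith [single_le_sum hnonneg hk]

section Top

variable {L : Finset ℚ} {k₀ : ℚ} (hk₀ : k₀ ∈ L) (hmax : ∀ x ∈ L, x ≤ k₀)
include hk₀ hmax

theorem maxLevel_eq_of_isGreatest : maxLevel L = k₀ := by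
  rw [maxLevel, ← coe_max' ⟨k₀, hk₀⟩, le_antisymm (max'_le _ _ _ hmax) (le_max' L k₀ hk₀)]
  rfl

omit hk₀ in
theorem filter_lt_eq_empty_of_isGreatest : L.filter (k₀ < ·) = ∅ :=
  filter_false_of_mem fun x hx => not_lt.mpr (hmax x hx)

theorem filter_le_eq_singleton_of_isGreatest : L.filter (k₀ ≤ ·) = {k₀} := by
  ext x
  simp only [mem_filter, mem_singleton]
  exact ⟨fun h => le_antisymm (hmax x h.1) h.2, fun h => by subst h; exact ⟨hk₀, le_rfl⟩⟩

theorem segLcm_eq_den_of_isGreatest : segLcm L k₀ = k₀.den := by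
  rw [segLcm, filter_le_eq_singleton_of_isGreatest hk₀ hmax, lcm_singleton, normalize_eq]

theorem gcdDrop_eq_of_isGreatest : gcdDrop L k₀ = (ram L : ℤ) - (ram L / k₀.den : ℕ) := by
  rw [gcdDrop, filter_lt_eq_empty_of_isGreatest hmax,
    filter_le_eq_singleton_of_isGreatest hk₀ hmax, gSeg_empty, gSeg_singleton hk₀]

theorem eq_singleton_of_isGreatest_of_segLcm_eq_ram
    (hmono : ∀ k ∈ L, ∀ k' ∈ L, k' < k → segLcm L k < segLcm L k')
    (h : segLcm L k₀ = ram L) : L = {k₀} := by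
  refine eq_singleton_iff_unique_mem.mpr ⟨hk₀, fun x hx => ?_⟩
  by_contra hx'
  have hlt := hmono k₀ hk₀ x hx (lt_of_le_of_ne (hmax x hx) hx')
  have := Nat.le_of_dvd (ram_pos L) (segLcm_dvd_ram L x)
  omega

end Top

theorem eq_of_top_bound_le_two {d n g : ℤ} (hd : 2 ≤ d) (hn : 2 * d < n) (hg : 1 ≤ g)
    (h : (d * g - g) * (n * g) - (d * g) ^ 2 + 1 ≤ 2) : g = 1 ∧ d = 2 ∧ n = 5 := by
  have hm : 1 ≤ (d - 1) * n - d ^ 2 := by nlinarith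
  have hgm : g ^ 2 * ((d - 1) * n - d ^ 2) ≤ 1 := by linarith
  have hg1 : g = 1 := by nlinarith
  subst hg1
  have hd2 : d = 2 := by nlinarith
  subst hd2
  exact ⟨rfl, rfl, by linarith⟩

theorem eq_five_halves_of_B_eq_two {L : Finset ℚ} (hL : IsLevelDatum L) {k₀ : ℚ} (hk₀ : k₀ ∈ L)
    (hmax : ∀ x ∈ L, x ≤ k₀) (htop : 2 < k₀) (hB : B L = 2) : L = {5 / 2} := by
  obtain ⟨hpos, hden, hmono⟩ := hL
  obtain ⟨g, hr⟩ := den_dvd_ram hk₀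
  have hg : 0 < g := Nat.pos_of_mul_pos_left (hr ▸ ram_pos L)
  have hbound := gcdDrop_mul_numer_le_B hpos hk₀
  rw [gcdDrop_eq_of_isGreatest hk₀ hmax, numer_eq hk₀, hB, hr, Nat.mul_div_cancel_left _ k₀.pos]
    at hbound
  push_cast at hbound
  have hd : 2 ≤ k₀.den := segLcm_eq_den_of_isGreatest hk₀ hmax ▸ hden k₀ hk₀
  obtain ⟨hg1, hd2, hn5⟩ := eq_of_top_bound_le_two (by exact_mod_cast hd)
    (Rat.two_mul_den_lt_num htop) (by exact_mod_cast hg) hbound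
  have hsingle : L = {k₀} := by
    refine eq_singleton_of_isGreatest_of_segLcm_eq_ram hk₀ hmax hmono ?_
    rw [segLcm_eq_den_of_isGreatest hk₀ hmax, hr, show g = 1 by exact_mod_cast hg1, mul_one]
  have hk₀_eq : k₀ = 5 / 2 := by
    rw [← Rat.num_div_den k₀, hn5, show (k₀.den : ℚ) = 2 by exact_mod_cast hd2]
    norm_num
  rw [hsingle, hk₀_eq]

theorem B_five_halves : B {(5 : ℚ) / 2} = 2 := by
  norm_num [B, ram, gSeg, numer, filter_singleton]

theorem LocallyMinimal.forall_lt_one_or_exists_max_gt_two {L : Finset ℚ} (hmin : LocallyMinimal L) :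
    (∀ k ∈ L, k < 1) ∨ ∃ k₀ ∈ L, (∀ x ∈ L, x ≤ k₀) ∧ 2 < k₀ := by
  rcases L.eq_empty_or_nonempty with rfl | hne
  · exact Or.inl fun k hk => absurd hk (notMem_empty k)
  have hk₀ := max'_mem L hne
  have hmax : ∀ x ∈ L, x ≤ L.max' hne := fun x hx => le_max' L x hx
  rcases hmin with rfl | h | h
  · exact absurd hne not_nonempty_empty
  · rw [maxLevel_eq_of_isGreatest hk₀ hmax] at h
    exact Or.inl fun k hk => (hmax k hk).trans_lt h
  · rw [maxLevel_eq_of_isGreatest hk₀ hmax] at h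
    exact Or.inr ⟨_, hk₀, hmax, h⟩

/-- for a locally minimal level datum at infinity, `B_L = 2 ↔ L = {5/2}`. -/
theorem stmt_4 (L : Finset ℚ) (hL : IsLevelDatum L) (hmin : LocallyMinimal L) :
    B L = 2 ↔ L = {(5 : ℚ) / 2} := by
  rcases hmin.forall_lt_one_or_exists_max_gt_two with hsmall | ⟨k₀, hk₀, hmax, htop⟩
  · refine iff_of_false (B_lt_two_of_forall_lt_one hsmall).ne fun h => ?_
    have := hsmall (5 / 2) (h ▸ mem_singleton_self _)
    norm_num at this
  · exact ⟨eq_five_halves_of_B_eq_two hL hk₀ hmax htop, fun h => h ▸ B_five_halves⟩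
end

section
/- Let L be a nonempty level datum whose largest level k₀ satisfies 1 < k₀ < 2, let ρ := Ram(L) and σ := k₀·ρ ∈ ℤ, and let L′ := {(ρ/(σ−ρ))·k : k ∈ L} with its integer elements removed (so L′ is again a level datum). Then B_{L′} = B_L. -/
open Finset

/-!
Write `ρ = Ram L`, `s_k = k ρ` and `ρ' = σ - ρ`, so the rescaled level of `k` is `s_k / ρ'`.
The gcd of the numerators divides `σ = ρ + ρ'`, hence `gcd(ρ', s) = gcd(ρ, s) = 1`: thus `L'`
has ramification order `ρ'` and the same numerators, and a level becomes an integer exactly when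
`ρ' ∣ s_k`, in which case its term in `B` vanishes anyway. So `B_{L'}` is `B_L` with `ρ` replaced
by `ρ'`. Every initial segment contains `k₀`, whose numerator is `ρ + ρ'`, so `gcd(ρ', ·)` and
`gcd(ρ, ·)` agree on it; only the leading term changes, by `(ρ' - ρ)(ρ + ρ') = ρ'² - ρ²`.
-/

theorem Nat.gcd_eq_gcd_of_dvd_add {a b g : ℕ} (h : g ∣ a + b) : b.gcd g = a.gcd g :=
  Nat.dvd_antisymm
    (Nat.dvd_gcd ((Nat.dvd_add_left (Nat.gcd_dvd_left b g)).mp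
      ((Nat.gcd_dvd_right b g).trans h)) (Nat.gcd_dvd_right b g))
    (Nat.dvd_gcd ((Nat.dvd_add_right (Nat.gcd_dvd_left a g)).mp
      ((Nat.gcd_dvd_right a g).trans h)) (Nat.gcd_dvd_right a g))

namespace Rat

theorem num_mul_eq_mul_den_of_mul_eq {x : ℚ} {n : ℕ} {z : ℤ} (h : x * n = z) :
    x.num * n = z * x.den := by
  have : (x.num : ℚ) * n = z * x.den := by
    rw [← h, ← mul_den_eq_num]; ring
  exact_mod_cast this

theorem den_dvd_of_mul_eq {x : ℚ} {n : ℕ} {z : ℤ} (h : x * n = z) : x.den ∣ n := by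
  have : (x.den : ℤ) ∣ x.num * n := ⟨z, by rw [num_mul_eq_mul_den_of_mul_eq h, mul_comm]⟩
  have : x.den ∣ x.num.natAbs * n := by
    simpa [Int.natAbs_mul] using Int.natAbs_dvd_natAbs.mpr this
  exact x.reduced.symm.dvd_of_dvd_mul_left this

theorem dvd_mul_den_of_mul_eq {x : ℚ} {n : ℕ} {z : ℤ} (h : x * n = z) : (n : ℤ) ∣ z * x.den :=
  ⟨x.num, by rw [← num_mul_eq_mul_den_of_mul_eq h, mul_comm]⟩

end Rat

theorem nonempty_of_one_lt_maxLevel {L : Finset ℚ} (h : 1 < maxLevel L) : L.Nonempty := by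
  rw [nonempty_iff_ne_empty]
  rintro rfl
  norm_num [maxLevel] at h

theorem maxLevel_eq_max' {L : Finset ℚ} (hL : L.Nonempty) : maxLevel L = L.max' hL := by
  rw [maxLevel, ← coe_max' hL]
  rfl

theorem maxLevel_mem {L : Finset ℚ} (hL : L.Nonempty) : maxLevel L ∈ L :=
  maxLevel_eq_max' hL ▸ max'_mem L hL

theorem le_maxLevel {L : Finset ℚ} (hL : L.Nonempty) {k : ℚ} (hk : k ∈ L) : k ≤ maxLevel L :=
  maxLevel_eq_max' hL ▸ le_max' L k hk

theorem ram_ne_zero (L : Finset ℚ) : ram L ≠ 0 := by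
  simp [ram, Finset.lcm_eq_zero_iff, Rat.den_ne_zero]

theorem numer_eq_mul_ram {L : Finset ℚ} {k : ℚ} (hk : k ∈ L) : (numer L k : ℚ) = k * ram L := by
  obtain ⟨m, hm⟩ : k.den ∣ ram L := dvd_lcm hk
  have : k * ram L = (k.num * m : ℤ) := by
    rw [hm]; push_cast; rw [← Rat.mul_den_eq_num]; ring
  rw [numer, this, Rat.num_intCast]

def segGcd (r : ℕ) (s : ℚ → ℤ) (T : Finset ℚ) : ℕ :=
  Nat.gcd r (T.gcd fun x => (s x).natAbs)

def gcdSum (r : ℕ) (s : ℚ → ℤ) (L : Finset ℚ) : ℤ :=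
  ∑ k ∈ L, ((segGcd r s (L.filter (k < ·)) : ℤ) - segGcd r s (L.filter (k ≤ ·))) * s k

theorem B_eq_gcdSum (L : Finset ℚ) : B L = gcdSum (ram L) (numer L) L - ram L ^ 2 + 1 := rfl

theorem segGcd_filter_of_dvd {n : ℕ} {s : ℚ → ℤ} {T : Finset ℚ} {p : ℚ → Prop}
    [DecidablePred p] (h : ∀ t ∈ T, ¬ p t → (n : ℤ) ∣ s t) :
    segGcd n s (T.filter p) = segGcd n s T := by
  refine Nat.dvd_antisymm ?_ (Nat.dvd_gcd (Nat.gcd_dvd_left _ _)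
    ((Nat.gcd_dvd_right _ _).trans (gcd_mono (filter_subset _ _))))
  refine Nat.dvd_gcd (Nat.gcd_dvd_left _ _) (Finset.dvd_gcd fun t ht => ?_)
  by_cases hp : p t
  · exact (Nat.gcd_dvd_right _ _).trans (gcd_dvd (mem_filter.mpr ⟨ht, hp⟩))
  · exact (Nat.gcd_dvd_left _ _).trans (Int.natCast_dvd.mp (h t ht hp))

theorem segGcd_filter_lt_of_dvd {n : ℕ} {s : ℚ → ℤ} {L : Finset ℚ} {k : ℚ}
    (hk : (n : ℤ) ∣ s k) : segGcd n s (L.filter (k < ·)) = segGcd n s (L.filter (k ≤ ·)) := by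
  have : L.filter (k < ·) = (L.filter (k ≤ ·)).filter (· ≠ k) := by
    ext x
    simp only [mem_filter, lt_iff_le_and_ne, ne_comm, and_assoc]
  rw [this, segGcd_filter_of_dvd]
  rintro t - h
  rwa [not_not.mp h]

theorem segGcd_eq_of_mem {a b : ℕ} {s : ℚ → ℤ} {T : Finset ℚ} {k : ℚ} (hk : k ∈ T)
    (hs : s k = a + b) : segGcd b s T = segGcd a s T := by
  refine Nat.gcd_eq_gcd_of_dvd_add ?_
  have := gcd_dvd (f := fun x => (s x).natAbs) hk
  rwa [hs, ← Nat.cast_add, Int.natAbs_natCast] at this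

theorem gcdSum_sub_sq {r r' : ℕ} {s : ℚ → ℤ} {L : Finset ℚ} {k₀ : ℚ} (hk₀ : k₀ ∈ L)
    (hmax : ∀ k ∈ L, k ≤ k₀) (hs : s k₀ = r + r') :
    gcdSum r' s L - r' ^ 2 = gcdSum r s L - r ^ 2 := by
  have hdiff : gcdSum r' s L - gcdSum r s L = (r' - r) * s k₀ := by
    rw [gcdSum, gcdSum, ← sum_sub_distrib, sum_eq_single_of_mem k₀ hk₀]
    · have hempty : L.filter (k₀ < ·) = ∅ :=
        filter_eq_empty_iff.mpr fun x hx => not_lt.mpr (hmax x hx)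
      rw [hempty, segGcd_eq_of_mem (mem_filter.mpr ⟨hk₀, le_rfl⟩) hs]
      simp only [segGcd, gcd_empty, Nat.gcd_zero_right]
      ring
    · intro k hk hne
      have hlt : k < k₀ := lt_of_le_of_ne (hmax k hk) hne
      rw [segGcd_eq_of_mem (mem_filter.mpr ⟨hk₀, hlt⟩) hs,
        segGcd_eq_of_mem (mem_filter.mpr ⟨hk₀, hlt.le⟩) hs, sub_self]
  rw [hs] at hdiff
  linear_combination hdiff

theorem segGcd_ram_numer_eq_one (L : Finset ℚ) : segGcd (ram L) (numer L) L = 1 := by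
  set g := segGcd (ram L) (numer L) L
  obtain ⟨b, hb⟩ : g ∣ ram L := Nat.gcd_dvd_left _ _
  have hg : g ≠ 0 := Nat.gcd_ne_zero_left (ram_ne_zero L)
  have hram_dvd : ram L ∣ b := lcm_dvd fun k hk => by
    obtain ⟨a, ha⟩ : (g : ℤ) ∣ numer L k :=
      Int.natCast_dvd.mpr ((Nat.gcd_dvd_right _ _).trans (gcd_dvd hk))
    refine Rat.den_dvd_of_mul_eq (z := a) (mul_left_cancel₀ (Nat.cast_ne_zero.mpr hg) ?_)
    have := numer_eq_mul_ram hk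
    rw [hb, ha] at this
    push_cast at this
    linear_combination -this
  have hb_eq : b = ram L := Nat.dvd_antisymm ⟨g, by rw [hb, mul_comm]⟩ hram_dvd
  rw [hb_eq] at hb
  exact (mul_eq_right₀ (ram_ne_zero L)).mp hb.symm

section rescale

variable {L : Finset ℚ} {c : ℚ}

theorem mem_rescale {x : ℚ} : x ∈ rescale L c ↔ (∃ k ∈ L, c * k = x) ∧ x.den ≠ 1 := by
  simp [rescale]

theorem rescale_eq_image : rescale L c = (L.filter fun k => (c * k).den ≠ 1).image (c * ·) :=
  filter_image

theorem filter_rescale (p : ℚ → Prop) [DecidablePred p] :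
    (rescale L c).filter p = rescale (L.filter fun k => p (c * k)) c := by
  ext x
  simp only [mem_filter, mem_rescale]
  constructor
  · rintro ⟨⟨⟨k, hk, rfl⟩, hden⟩, hp⟩
    exact ⟨⟨k, ⟨hk, hp⟩, rfl⟩, hden⟩
  · rintro ⟨⟨k, ⟨hk, hp⟩, rfl⟩, hden⟩
    exact ⟨⟨⟨k, hk, rfl⟩, hden⟩, hp⟩

theorem filter_rescale_lt (hc : 0 < c) (k : ℚ) :
    (rescale L c).filter (c * k < ·) = rescale (L.filter (k < ·)) c := by
  simp_rw [filter_rescale, mul_lt_mul_iff_right₀ hc]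

theorem filter_rescale_le (hc : 0 < c) (k : ℚ) :
    (rescale L c).filter (c * k ≤ ·) = rescale (L.filter (k ≤ ·)) c := by
  simp_rw [filter_rescale, mul_le_mul_iff_right₀ hc]

theorem sum_rescale {M : Type*} [AddCommMonoid M] (hc : c ≠ 0) (f : ℚ → M) :
    ∑ x ∈ rescale L c, f x = ∑ k ∈ L.filter (fun k => (c * k).den ≠ 1), f (c * k) := by
  rw [rescale_eq_image, sum_image fun a _ b _ hab => mul_left_cancel₀ hc hab]

theorem den_dvd_ram_rescale {k : ℚ} (hk : k ∈ L) : (c * k).den ∣ ram (rescale L c) := by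
  by_cases hden : (c * k).den = 1
  · exact hden ▸ one_dvd _
  · exact dvd_lcm (mem_rescale.mpr ⟨⟨k, hk, rfl⟩, hden⟩)

variable {n : ℕ} {s : ℚ → ℤ} (hs : ∀ k ∈ L, c * k * n = s k)
include hs

theorem ram_rescale (hcop : segGcd n s L = 1) : ram (rescale L c) = n := by
  refine Nat.dvd_antisymm (lcm_dvd fun x hx => ?_) ?_
  · obtain ⟨⟨k, hk, rfl⟩, -⟩ := mem_rescale.mp hx
    exact Rat.den_dvd_of_mul_eq (hs k hk)
  · have : n ∣ L.gcd fun k => ram (rescale L c) * (s k).natAbs := Finset.dvd_gcd fun k hk => by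
      have := (Rat.dvd_mul_den_of_mul_eq (hs k hk)).trans
        (mul_dvd_mul_left (s k) (Int.natCast_dvd_natCast.mpr (den_dvd_ram_rescale hk)))
      rw [mul_comm, ← Int.natAbs_natCast (ram _), ← Int.natAbs_mul]
      exact Int.natCast_dvd.mp this
    rw [Finset.gcd_mul_left, normalize_eq] at this
    exact Nat.Coprime.dvd_of_dvd_mul_right hcop this

theorem dvd_of_den_eq_one {k : ℚ} (hk : k ∈ L) (hden : (c * k).den = 1) : (n : ℤ) ∣ s k := by
  simpa [hden] using Rat.dvd_mul_den_of_mul_eq (hs k hk)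

variable (hcop : segGcd n s L = 1)
include hcop

theorem numer_rescale {k : ℚ} (hk : k ∈ L) : numer (rescale L c) (c * k) = s k := by
  rw [numer, ram_rescale hs hcop, hs k hk, Rat.num_intCast]

theorem segGcd_rescale {T : Finset ℚ} (hT : T ⊆ L) :
    segGcd n (numer (rescale L c)) (rescale T c) = segGcd n s T := by
  rw [segGcd, rescale_eq_image (L := T), gcd_image, Function.comp_def]
  have : ∀ k ∈ T.filter fun k => (c * k).den ≠ 1,
      (numer (rescale L c) (c * k)).natAbs = (s k).natAbs := fun k hk =>
    congrArg Int.natAbs (numer_rescale hs hcop (hT (filter_subset _ _ hk)))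
  rw [gcd_congr rfl this]
  exact segGcd_filter_of_dvd fun t ht hden => dvd_of_den_eq_one hs (hT ht) (not_not.mp hden)

theorem B_rescale (hc : 0 < c) : B (rescale L c) = gcdSum n s L - n ^ 2 + 1 := by
  rw [B_eq_gcdSum, ram_rescale hs hcop, gcdSum, gcdSum, sum_rescale hc.ne']
  congr 2
  rw [← sum_subset (filter_subset (fun k => (c * k).den ≠ 1) L)]
  · refine sum_congr rfl fun k hk => ?_
    rw [filter_rescale_lt hc, filter_rescale_le hc, segGcd_rescale hs hcop (filter_subset _ _),
      segGcd_rescale hs hcop (filter_subset _ _), numer_rescale hs hcop (filter_subset _ _ hk)]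
  · intro k hk hk'
    have hden : (c * k).den = 1 := by simpa [hk] using hk'
    rw [segGcd_filter_lt_of_dvd (dvd_of_den_eq_one hs hk hden), sub_self, zero_mul]

end rescale

theorem stmt_8_general (L : Finset ℚ) (h1 : 1 < maxLevel L) :
    B (rescale L ((ram L : ℚ) / ((sigma0 L : ℚ) - (ram L : ℚ)))) = B L := by
  have hne := nonempty_of_one_lt_maxLevel h1
  have hmem := maxLevel_mem hne
  set ρ := ram L
  have hρ : (0 : ℚ) < ρ := Nat.cast_pos.mpr (Nat.pos_of_ne_zero (ram_ne_zero L))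
  have hgap : (0 : ℚ) < sigma0 L - ρ := by
    rw [show (sigma0 L : ℚ) = maxLevel L * ρ from numer_eq_mul_ram hmem]
    nlinarith
  obtain ⟨ρ', hρ'⟩ : ∃ ρ' : ℕ, sigma0 L - ρ = ρ' :=
    Int.eq_ofNat_of_zero_le (by exact_mod_cast hgap.le)
  have hρ'Q : (sigma0 L : ℚ) - ρ = ρ' := by exact_mod_cast hρ'
  rw [hρ'Q] at hgap ⊢
  have hσ : numer L (maxLevel L) = ρ + ρ' := sub_eq_iff_eq_add'.mp hρ'
  have hs : ∀ k ∈ L, ρ / ρ' * k * ρ' = numer L k := fun k hk => by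
    rw [numer_eq_mul_ram hk]; field_simp; exact mul_comm _ _
  have hcop : segGcd ρ' (numer L) L = 1 :=
    (segGcd_eq_of_mem hmem hσ).trans (segGcd_ram_numer_eq_one L)
  calc B (rescale L (ρ / ρ')) = gcdSum ρ' (numer L) L - ρ' ^ 2 + 1 :=
        B_rescale hs hcop (div_pos hρ hgap)
    _ = gcdSum ρ (numer L) L - ρ ^ 2 + 1 := by
        rw [gcdSum_sub_sq hmem (fun _ => le_maxLevel hne) hσ]
    _ = B L := rfl

/-- if the largest level `k₀` of a nonempty level datum `L` satisfies
`1 < k₀ < 2`, with `ρ = Ram(L)`, `σ = k₀·ρ ∈ ℤ`, and `L'` is the rescaling of `L` by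
`ρ/(σ−ρ)` with integer elements removed, then `B_{L'} = B_L`. -/
theorem stmt_8 (L : Finset ℚ) (hL : IsLevelDatum L) (hne : L.Nonempty)
    (h1 : 1 < maxLevel L) (h2 : maxLevel L < 2) :
    B (rescale L ((ram L : ℚ) / ((sigma0 L : ℚ) - (ram L : ℚ)))) = B L :=
  stmt_8_general L h1
end
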